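/- Let H be a Hopf *-algebra over ℂ whose underlying Hopf algebra has a regular antipode. If H is inner unitary, then H is inner linear. -/

import Mathlib

open scoped TensorProduct

section Defs

variable {H : Type*} [Ring H] [HopfAlgebra ℂ H]

/-- The subspace `P ⊗ Q` of `H ⊗ H`. -/
noncomputable def subTensor (P Q : Submodule ℂ H) : Submodule ℂ (H ⊗[ℂ] H) :=
  LinearMap.range (TensorProduct.map P.subtype Q.subtype)

/-- A two-sided ideal (as a `ℂ`-subspace closed under left and right multiplication). -/
structure IsTwoSidedIdealSub (I : Submodule ℂ H) : Prop where
  mul_mem_left : ∀ (x : H) ⦃a : H⦄, a ∈ I → x * a ∈ I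
  mul_mem_right : ∀ ⦃a : H⦄ (x : H), a ∈ I → a * x ∈ I

/-- A Hopf ideal: a two-sided ideal `I` with `ε(I) = 0`, `Δ(I) ⊆ I⊗H + H⊗I` and `S(I) ⊆ I`. -/
structure IsHopfIdeal (I : Submodule ℂ H) extends IsTwoSidedIdealSub I : Prop where
  counit_eq_zero : ∀ a ∈ I, Coalgebra.counit (R := ℂ) a = 0
  comul_mem : ∀ a ∈ I, Coalgebra.comul (R := ℂ) a ∈ subTensor I ⊤ ⊔ subTensor ⊤ I
  antipode_mem : ∀ a ∈ I, HopfAlgebra.antipode (R := ℂ) a ∈ I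

/-- Inner faithfulness of an algebra representation: the kernel contains no nonzero Hopf ideal. -/
def InnerFaithful {A : Type*} [Semiring A] [Algebra ℂ A] (π : H →ₐ[ℂ] A) : Prop :=
  ∀ J : Submodule ℂ H, IsHopfIdeal J → (∀ x ∈ J, π x = 0) → J = ⊥

/-- Inner linearity: there is a two-sided ideal of finite codimension containing no nonzero
Hopf ideal. -/
def InnerLinear (H : Type*) [Ring H] [HopfAlgebra ℂ H] : Prop :=
  ∃ I : Submodule ℂ H, IsTwoSidedIdealSub I ∧ FiniteDimensional ℂ (H ⧸ I) ∧
    ∀ J : Submodule ℂ H, IsHopfIdeal J → J ≤ I → J = ⊥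

end Defs

section Regular

variable {H : Type*} [Ring H] [HopfAlgebra ℂ H]

/-- `x ↦ Σ φ(x₍₁₎) x₍₂₎`. -/
noncomputable def lconv (φ : H →ₗ[ℂ] ℂ) : H →ₗ[ℂ] H :=
  (TensorProduct.lid ℂ H).toLinearMap ∘ₗ TensorProduct.map φ LinearMap.id ∘ₗ
    Coalgebra.comul (R := ℂ)

/-- `x ↦ Σ x₍₁₎ ψ(x₍₂₎)`. -/
noncomputable def rconv (ψ : H →ₗ[ℂ] ℂ) : H →ₗ[ℂ] H :=
  (TensorProduct.rid ℂ H).toLinearMap ∘ₗ TensorProduct.map LinearMap.id ψ ∘ₗ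
    Coalgebra.comul (R := ℂ)

/-- The convolution `Φ * id_H * Φ⁻¹ : x ↦ Σ Φ(x₍₁₎) x₍₂₎ Φ⁻¹(x₍₃₎)`, with `Φ⁻¹ = Φ ∘ S`. -/
noncomputable def convConj (Φ : H →ₐ[ℂ] ℂ) : H →ₗ[ℂ] H :=
  rconv (Φ.toLinearMap ∘ₗ HopfAlgebra.antipode (R := ℂ)) ∘ₗ lconv Φ.toLinearMap

/-- A group-like element: `Δ(a) = a ⊗ a` and `ε(a) = 1`. -/
def IsGroupLikeElem' (a : H) : Prop :=
  Coalgebra.comul (R := ℂ) a = a ⊗ₜ[ℂ] a ∧ Coalgebra.counit (R := ℂ) a = 1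

/-- `H` has a regular antipode. -/
def HasRegularAntipode (H : Type*) [Ring H] [HopfAlgebra ℂ H] : Prop :=
  ∃ (a : H) (Φ : H →ₐ[ℂ] ℂ) (m : ℕ), 1 ≤ m ∧ IsGroupLikeElem' a ∧
    ∀ x : H, (⇑(HopfAlgebra.antipode (R := ℂ) (A := H)))^[2 * m] x =
      a * convConj Φ x * HopfAlgebra.antipode (R := ℂ) a

end Regular

section Star

variable {H : Type*} [Ring H] [StarRing H] [Algebra ℂ H] [StarModule ℂ H]

/-- The map `* ⊗ *` on `H ⊗[ℂ] H`, sending `x ⊗ y` to `x* ⊗ y*`. -/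
noncomputable def starTensor : H ⊗[ℂ] H →+ H ⊗[ℂ] H :=
  TensorProduct.liftAddHom
    { toFun := fun x =>
        { toFun := fun y => star x ⊗ₜ[ℂ] star y
          map_zero' := by simp
          map_add' := fun y z => by simp [star_add, TensorProduct.tmul_add] }
      map_zero' := by ext y; simp
      map_add' := fun x z => by ext y; simp [star_add, TensorProduct.add_tmul] }
    (fun c x y => by
      simp [star_smul, TensorProduct.smul_tmul', TensorProduct.tmul_smul])

end Star

/-- A witness that a Hopf `*`-algebra is inner unitary: a finite-dimensional `C*`-algebra `A`
together with a `*`-representation `π : H → A` whose kernel contains no nonzero Hopf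
`*`-ideal. -/
structure InnerUnitaryWitness (H : Type*) [Ring H] [HopfAlgebra ℂ H] [StarRing H] where
  A : Type
  [nring : NormedRing A]
  [sring : StarRing A]
  [cstar : CStarRing A]
  [nalg : NormedAlgebra ℂ A]
  [smod : StarModule ℂ A]
  findim : FiniteDimensional ℂ A
  π : H →ₐ[ℂ] A
  star_map : ∀ x : H, π (star x) = star (π x)
  faithful : ∀ J : Submodule ℂ H, IsHopfIdeal J → (∀ x ∈ J, star x ∈ J) →
    (∀ x ∈ J, π x = 0) → J = ⊥

/-!
The ideal is `ker π ∩ ker Φ`. Let `J` be a Hopf ideal inside it. Since `Φ` and `Φ ∘ S` vanish on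
the coideal `J`, both `Φ * id * Φ⁻¹` and its inverse `Φ⁻¹ * id * Φ` preserve `J`, so regularity of
the antipode gives `J ⊆ S^{2m}(J) ⊆ S(J)`. In a Hopf `*`-algebra `S ∘ * ∘ S = *`, hence `J*` is
again stable under `S`, and `J + J*` is a Hopf `*`-ideal inside `ker π`. Inner unitarity forces it,
and thus `J`, to vanish.
-/

open Coalgebra HopfAlgebra TensorProduct WithConv

section Coideal

variable {H : Type*} [Ring H] [HopfAlgebra ℂ H]

lemma tmul_mem_subTensor {P Q : Submodule ℂ H} {p q : H} (hp : p ∈ P) (hq : q ∈ Q) :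
    p ⊗ₜ[ℂ] q ∈ subTensor P Q :=
  ⟨(⟨p, hp⟩ : P) ⊗ₜ (⟨q, hq⟩ : Q), rfl⟩

lemma subTensor_induction {P Q : Submodule ℂ H} {C : H ⊗[ℂ] H → Prop} (zero : C 0)
    (add : ∀ u v, C u → C v → C (u + v)) (tmul : ∀ p ∈ P, ∀ q ∈ Q, C (p ⊗ₜ q)) :
    ∀ u ∈ subTensor P Q, C u := by
  rintro _ ⟨t, rfl⟩
  induction t using TensorProduct.induction_on with
  | zero => simpa using zero
  | tmul p q => exact tmul p p.2 q q.2
  | add u v hu hv => rw [map_add]; exact add _ _ hu hv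

lemma subTensor_mono {P P' Q Q' : Submodule ℂ H} (hP : P ≤ P') (hQ : Q ≤ Q') :
    subTensor P Q ≤ subTensor P' Q' :=
  subTensor_induction (Submodule.zero_mem _) (fun _ _ => Submodule.add_mem _)
    fun _ hp _ hq => tmul_mem_subTensor (hP hp) (hQ hq)

lemma lconv_mem {J : Submodule ℂ H}
    (hJ : ∀ z ∈ J, comul (R := ℂ) z ∈ subTensor J ⊤ ⊔ subTensor ⊤ J)
    {φ : H →ₗ[ℂ] ℂ} (hφ : ∀ z ∈ J, φ z = 0) {z : H} (hz : z ∈ J) : lconv φ z ∈ J := by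
  obtain ⟨u, hu, v, hv, huv⟩ := Submodule.mem_sup.mp (hJ z hz)
  simp only [lconv, LinearMap.comp_apply, ← huv, map_add]
  refine J.add_mem ?_ ?_
  · refine subTensor_induction (C := fun t => TensorProduct.lid ℂ H (map φ .id t) ∈ J)
      (by simp) (fun _ _ => by simpa only [map_add] using J.add_mem) (fun p hp q _ => ?_) u hu
    simp [hφ p hp]
  · refine subTensor_induction (C := fun t => TensorProduct.lid ℂ H (map φ .id t) ∈ J)
      (by simp) (fun _ _ => by simpa only [map_add] using J.add_mem) (fun p _ q hq => ?_) v hv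
    simpa using J.smul_mem _ hq

lemma rconv_mem {J : Submodule ℂ H}
    (hJ : ∀ z ∈ J, comul (R := ℂ) z ∈ subTensor J ⊤ ⊔ subTensor ⊤ J)
    {ψ : H →ₗ[ℂ] ℂ} (hψ : ∀ z ∈ J, ψ z = 0) {z : H} (hz : z ∈ J) : rconv ψ z ∈ J := by
  obtain ⟨u, hu, v, hv, huv⟩ := Submodule.mem_sup.mp (hJ z hz)
  simp only [rconv, LinearMap.comp_apply, ← huv, map_add]
  refine J.add_mem ?_ ?_
  · refine subTensor_induction (C := fun t => TensorProduct.rid ℂ H (map .id ψ t) ∈ J)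
      (by simp) (fun _ _ => by simpa only [map_add] using J.add_mem) (fun p hp q _ => ?_) u hu
    simpa using J.smul_mem _ hp
  · refine subTensor_induction (C := fun t => TensorProduct.rid ℂ H (map .id ψ t) ∈ J)
      (by simp) (fun _ _ => by simpa only [map_add] using J.add_mem) (fun p _ q hq => ?_) v hv
    simp [hψ q hq]

end Coideal

section Convolution

variable {H : Type*} [Ring H] [HopfAlgebra ℂ H]

lemma Coalgebra.Repr.lconv_apply {ι : Type*} {x : H} (r : Repr ℂ x ι) (φ : H →ₗ[ℂ] ℂ) :
    lconv φ x = ∑ i ∈ r.index, φ (r.left i) • r.right i := by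
  simp [lconv, ← r.eq]

lemma Coalgebra.Repr.rconv_apply {ι : Type*} {x : H} (r : Repr ℂ x ι) (ψ : H →ₗ[ℂ] ℂ) :
    rconv ψ x = ∑ i ∈ r.index, ψ (r.right i) • r.left i := by
  simp [rconv, ← r.eq]

lemma lconv_comp_lconv (α β : H →ₗ[ℂ] ℂ) :
    lconv α ∘ₗ lconv β = lconv (toConv β * toConv α).ofConv := by
  ext x
  have := congr(TensorProduct.lid ℂ H (map β (TensorProduct.lid ℂ H ∘ₗ map α .id)
    $(sum_tmul_tmul_eq (ℛ ℂ x) (fun i => ℛ ℂ ((ℛ ℂ x).left i)) (fun i => ℛ ℂ ((ℛ ℂ x).right i)))))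
  rw [LinearMap.comp_apply, (ℛ ℂ x).lconv_apply β, (ℛ ℂ x).lconv_apply _]
  simp only [map_sum, map_smul]
  simp only [(ℛ ℂ _).lconv_apply α, (ℛ ℂ _).convMul_apply]
  simpa [Finset.smul_sum, Finset.sum_smul, smul_smul, mul_comm, map_sum] using this.symm

lemma rconv_comp_rconv (α β : H →ₗ[ℂ] ℂ) :
    rconv α ∘ₗ rconv β = rconv (toConv α * toConv β).ofConv := by
  ext x
  have := congr(TensorProduct.rid ℂ H (map .id (LinearMap.mul' ℂ ℂ ∘ₗ map α β)
    $(sum_tmul_tmul_eq (ℛ ℂ x) (fun i => ℛ ℂ ((ℛ ℂ x).left i)) (fun i => ℛ ℂ ((ℛ ℂ x).right i)))))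
  rw [LinearMap.comp_apply, (ℛ ℂ x).rconv_apply β, (ℛ ℂ x).rconv_apply _]
  simp only [map_sum, map_smul]
  simp only [(ℛ ℂ _).rconv_apply α, (ℛ ℂ _).convMul_apply]
  simpa [Finset.smul_sum, Finset.sum_smul, smul_smul, mul_comm, map_sum] using this

lemma lconv_one : lconv (1 : WithConv (H →ₗ[ℂ] ℂ)).ofConv = .id := by
  ext x
  simpa [(ℛ ℂ x).lconv_apply _] using sum_counit_smul (ℛ ℂ x)

lemma rconv_one : rconv (1 : WithConv (H →ₗ[ℂ] ℂ)).ofConv = .id := by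
  ext x
  have := congr(TensorProduct.rid ℂ H $(sum_tmul_counit_eq (R := ℂ) (ℛ ℂ x)))
  rw [map_sum] at this
  simpa [(ℛ ℂ x).rconv_apply _] using this

lemma AlgHom.comp_antipode_mul_self {B : Type*} [Semiring B] [Algebra ℂ B] (f : H →ₐ[ℂ] B) :
    toConv (f.toLinearMap ∘ₗ antipode ℂ) * toConv f.toLinearMap = 1 := by
  ext x
  simp [(ℛ ℂ x).convMul_apply, ← map_mul, ← map_sum, sum_antipode_mul_eq_algebraMap_counit]

lemma convConj_lconv_rconv (Φ : H →ₐ[ℂ] ℂ) (x : H) :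
    convConj Φ (lconv (Φ.toLinearMap ∘ₗ antipode ℂ) (rconv Φ.toLinearMap x)) = x := by
  have hl : lconv Φ.toLinearMap ∘ₗ lconv (Φ.toLinearMap ∘ₗ antipode ℂ) = .id := by
    rw [lconv_comp_lconv, Φ.comp_antipode_mul_self, lconv_one]
  have hr : rconv (Φ.toLinearMap ∘ₗ antipode ℂ) ∘ₗ rconv Φ.toLinearMap = .id := by
    rw [rconv_comp_rconv, Φ.comp_antipode_mul_self, rconv_one]
  rw [convConj, LinearMap.comp_apply, ← LinearMap.comp_apply (lconv _), hl, LinearMap.id_apply]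
  exact congr($hr x)

end Convolution

section RegularAntipode

variable {H : Type*} [Ring H] [HopfAlgebra ℂ H]

lemma IsHopfIdeal.le_map_antipode {J : Submodule ℂ H} (hJ : IsHopfIdeal J) {a : H}
    {Φ : H →ₐ[ℂ] ℂ} {m : ℕ} (hm : 1 ≤ m) (ha : IsGroupLikeElem' a)
    (hS : ∀ x : H, (⇑(antipode ℂ (A := H)))^[2 * m] x = a * convConj Φ x * antipode ℂ a)
    (hΦ : ∀ x ∈ J, Φ x = 0) : J ≤ J.map (antipode ℂ) := by
  intro x hx
  have ha' : IsGroupLikeElem ℂ a := ⟨ha.2, ha.1⟩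
  have hSJ : Set.MapsTo (antipode ℂ) (J : Set H) J := hJ.antipode_mem
  set y := lconv (Φ.toLinearMap ∘ₗ antipode ℂ) (rconv Φ.toLinearMap (antipode ℂ a * x * a))
  have hy : y ∈ J :=
    lconv_mem hJ.comul_mem (fun z hz => hΦ _ (hSJ hz))
      (rconv_mem hJ.comul_mem hΦ (hJ.mul_mem_right _ (hJ.mul_mem_left _ hx)))
  have hSy : (⇑(antipode ℂ (A := H)))^[2 * m] y = x := by
    rw [hS, convConj_lconv_rconv, mul_assoc, mul_assoc, mul_assoc, ha'.mul_antipode_cancel,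
      mul_one, ← mul_assoc, ha'.mul_antipode_cancel, one_mul]
  obtain ⟨k, hk⟩ : ∃ k, 2 * m = k + 1 := ⟨2 * m - 1, by omega⟩
  rw [hk, Function.iterate_succ_apply'] at hSy
  exact ⟨_, hSJ.iterate k hy, hSy⟩

end RegularAntipode

section HopfIdeal

variable {H : Type*} [Ring H] [HopfAlgebra ℂ H]

lemma IsTwoSidedIdealSub.sup {I J : Submodule ℂ H} (hI : IsTwoSidedIdealSub I)
    (hJ : IsTwoSidedIdealSub J) : IsTwoSidedIdealSub (I ⊔ J) where
  mul_mem_left x a ha := by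
    obtain ⟨u, hu, v, hv, rfl⟩ := Submodule.mem_sup.mp ha
    rw [mul_add]
    exact Submodule.add_mem_sup (hI.mul_mem_left x hu) (hJ.mul_mem_left x hv)
  mul_mem_right a x ha := by
    obtain ⟨u, hu, v, hv, rfl⟩ := Submodule.mem_sup.mp ha
    rw [add_mul]
    exact Submodule.add_mem_sup (hI.mul_mem_right x hu) (hJ.mul_mem_right x hv)

lemma IsHopfIdeal.sup {I J : Submodule ℂ H} (hI : IsHopfIdeal I) (hJ : IsHopfIdeal J) :
    IsHopfIdeal (I ⊔ J) where
  toIsTwoSidedIdealSub := hI.toIsTwoSidedIdealSub.sup hJ.toIsTwoSidedIdealSub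
  counit_eq_zero a ha := by
    obtain ⟨u, hu, v, hv, rfl⟩ := Submodule.mem_sup.mp ha
    rw [map_add, hI.counit_eq_zero u hu, hJ.counit_eq_zero v hv, add_zero]
  comul_mem a ha := by
    obtain ⟨u, hu, v, hv, rfl⟩ := Submodule.mem_sup.mp ha
    have hmono : ∀ {K : Submodule ℂ H}, K ≤ I ⊔ J →
        subTensor K ⊤ ⊔ subTensor ⊤ K ≤ subTensor (I ⊔ J) ⊤ ⊔ subTensor ⊤ (I ⊔ J) :=
      fun hK => sup_le_sup (subTensor_mono hK le_rfl) (subTensor_mono le_rfl hK)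
    rw [map_add]
    exact Submodule.add_mem _ (hmono le_sup_left (hI.comul_mem u hu))
      (hmono le_sup_right (hJ.comul_mem v hv))
  antipode_mem a ha := by
    obtain ⟨u, hu, v, hv, rfl⟩ := Submodule.mem_sup.mp ha
    rw [map_add]
    exact Submodule.add_mem_sup (hI.antipode_mem u hu) (hJ.antipode_mem v hv)

lemma InnerLinear.of_innerFaithful {B : Type*} [Ring B] [Algebra ℂ B] [FiniteDimensional ℂ B]
    (f : H →ₐ[ℂ] B) (hf : InnerFaithful f) : InnerLinear H := by
  refine ⟨LinearMap.ker f.toLinearMap, ⟨fun x a ha => ?_, fun a x ha => ?_⟩,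
    (LinearMap.quotKerEquivRange _).symm.finiteDimensional, fun J hJ hJf => hf J hJ hJf⟩
  all_goals simp_all [LinearMap.mem_ker]

end HopfIdeal

section StarSubmodule

variable {M : Type*} [AddCommMonoid M] [StarAddMonoid M] [Module ℂ M] [StarModule ℂ M]

def starSubmodule (J : Submodule ℂ M) : Submodule ℂ M where
  carrier := {x | star x ∈ J}
  add_mem' hx hy := by simpa only [Set.mem_ofPred_eq, star_add] using J.add_mem hx hy
  zero_mem' := by simp
  smul_mem' c x hx := by simpa only [Set.mem_ofPred_eq, star_smul] using J.smul_mem _ hx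

@[simp] lemma mem_starSubmodule {J : Submodule ℂ M} {x : M} :
    x ∈ starSubmodule J ↔ star x ∈ J := Iff.rfl

lemma star_mem_sup_starSubmodule {J : Submodule ℂ M} {x : M} (hx : x ∈ J ⊔ starSubmodule J) :
    star x ∈ J ⊔ starSubmodule J := by
  obtain ⟨u, hu, v, hv, rfl⟩ := Submodule.mem_sup.mp hx
  rw [star_add, add_comm]
  exact Submodule.add_mem_sup hv (by simpa using hu)

lemma map_eq_zero_of_mem_sup_starSubmodule {A F : Type*} [AddMonoid A] [StarAddMonoid A]
    [FunLike F M A] [AddMonoidHomClass F M A] (f : F) (hf : ∀ x, f (star x) = star (f x))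
    {J : Submodule ℂ M} (hJ : ∀ x ∈ J, f x = 0) {x : M} (hx : x ∈ J ⊔ starSubmodule J) :
    f x = 0 := by
  obtain ⟨u, hu, v, hv, rfl⟩ := Submodule.mem_sup.mp hx
  rw [map_add, hJ u hu, ← star_star v, hf, hJ _ hv, star_zero, add_zero]

end StarSubmodule

@[simp] lemma starTensor_tmul {H : Type*} [Ring H] [StarRing H] [Algebra ℂ H] [StarModule ℂ H]
    (x y : H) : starTensor (x ⊗ₜ[ℂ] y) = star x ⊗ₜ star y := rfl

section Star

variable {H : Type*} [Ring H] [HopfAlgebra ℂ H] [StarRing H] [StarModule ℂ H]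

lemma starTensor_mem_subTensor {P Q : Submodule ℂ H} {u : H ⊗[ℂ] H} (hu : u ∈ subTensor P Q) :
    starTensor u ∈ subTensor (starSubmodule P) (starSubmodule Q) :=
  subTensor_induction (C := fun u => starTensor u ∈ subTensor (starSubmodule P) (starSubmodule Q))
    (by simp) (fun _ _ => by simpa only [map_add] using Submodule.add_mem _)
    (fun _ hp _ hq => tmul_mem_subTensor (by simpa using hp) (by simpa using hq)) u hu

noncomputable def starAntipodeStar : H →ₗ[ℂ] H where
  toFun x := star (antipode ℂ (star x))
  map_add' x y := by simp
  map_smul' c x := by simp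

lemma sum_mul_starAntipodeStar
    (hstar_comul : ∀ x : H, comul (R := ℂ) (star x) = starTensor (comul (R := ℂ) x))
    (hstar_counit : ∀ x : H, counit (R := ℂ) (star x) = starRingEnd ℂ (counit (R := ℂ) x))
    {ι : Type*} {x : H} (r : Repr ℂ x ι) :
    ∑ i ∈ r.index, r.right i * starAntipodeStar (r.left i) = algebraMap ℂ H (counit x) := by
  let rstar : Repr ℂ (star x) ι :=
    { index := r.index
      left i := star (r.left i)
      right i := star (r.right i)
      eq := by simp [hstar_comul, ← r.eq, map_sum] }
  have := congr(star $(sum_antipode_mul_eq_algebraMap_counit rstar))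
  simpa [rstar, starAntipodeStar, star_sum, hstar_counit, ← algebraMap_star_comm] using this

/-- `starAntipodeStar` is an antipode for the co-opposite coalgebra (`sum_mul_starAntipodeStar`),
so `S ∘ starAntipodeStar` is a left convolution inverse of `S`, whose right inverse is `id`. -/
lemma antipode_comp_starAntipodeStar
    (hstar_comul : ∀ x : H, comul (R := ℂ) (star x) = starTensor (comul (R := ℂ) x))
    (hstar_counit : ∀ x : H, counit (R := ℂ) (star x) = starRingEnd ℂ (counit (R := ℂ) x)) :
    antipode ℂ ∘ₗ starAntipodeStar = (.id : H →ₗ[ℂ] H) := by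
  refine congr(ofConv $(left_inv_eq_right_inv (a := toConv (antipode ℂ))
    ?_ LinearMap.antipode_mul_id))
  ext x
  simp [(ℛ ℂ x).convMul_apply, ← antipode_mul_antidistrib, ← map_sum,
    sum_mul_starAntipodeStar hstar_comul hstar_counit, Algebra.algebraMap_eq_smul_one]

lemma antipode_star_antipode
    (hstar_comul : ∀ x : H, comul (R := ℂ) (star x) = starTensor (comul (R := ℂ) x))
    (hstar_counit : ∀ x : H, counit (R := ℂ) (star x) = starRingEnd ℂ (counit (R := ℂ) x))
    (x : H) : antipode ℂ (star (antipode ℂ x)) = star x := by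
  simpa [starAntipodeStar] using
    congr($(antipode_comp_starAntipodeStar hstar_comul hstar_counit) (star x))

lemma IsTwoSidedIdealSub.starSubmodule {J : Submodule ℂ H} (hJ : IsTwoSidedIdealSub J) :
    IsTwoSidedIdealSub (starSubmodule J) where
  mul_mem_left x a ha := by
    rw [mem_starSubmodule, star_mul]
    exact hJ.mul_mem_right _ ha
  mul_mem_right a x ha := by
    rw [mem_starSubmodule, star_mul]
    exact hJ.mul_mem_left _ ha

lemma IsHopfIdeal.starSubmodule
    (hstar_comul : ∀ x : H, comul (R := ℂ) (star x) = starTensor (comul (R := ℂ) x))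
    (hstar_counit : ∀ x : H, counit (R := ℂ) (star x) = starRingEnd ℂ (counit (R := ℂ) x))
    {J : Submodule ℂ H} (hJ : IsHopfIdeal J) (hJS : J ≤ J.map (antipode ℂ)) :
    IsHopfIdeal (starSubmodule J) where
  toIsTwoSidedIdealSub := hJ.toIsTwoSidedIdealSub.starSubmodule
  counit_eq_zero a ha := by
    rw [← star_star a, hstar_counit, hJ.counit_eq_zero _ ha, map_zero]
  comul_mem a ha := by
    obtain ⟨u, hu, v, hv, huv⟩ := Submodule.mem_sup.mp (hJ.comul_mem _ ha)
    rw [← star_star a, hstar_comul, ← huv, map_add]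
    exact Submodule.add_mem_sup (subTensor_mono le_rfl le_top (starTensor_mem_subTensor hu))
      (subTensor_mono le_top le_rfl (starTensor_mem_subTensor hv))
  antipode_mem a ha := by
    obtain ⟨y, hy, hya⟩ := hJS ha
    rw [mem_starSubmodule, ← star_star a, ← hya, antipode_star_antipode hstar_comul hstar_counit,
      star_star]
    exact hy

end Star

theorem stmt9 (H : Type*) [Ring H] [HopfAlgebra ℂ H] [StarRing H] [StarModule ℂ H]
    -- `H` is a Hopf `*`-algebra:
    (hstar_comul : ∀ x : H,
      Coalgebra.comul (R := ℂ) (star x) = starTensor (Coalgebra.comul (R := ℂ) x))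
    (hstar_counit : ∀ x : H,
      Coalgebra.counit (R := ℂ) (star x) = starRingEnd ℂ (Coalgebra.counit (R := ℂ) x))
    -- the underlying Hopf algebra has a regular antipode:
    (hreg : HasRegularAntipode H)
    -- `H` is inner unitary:
    (hunit : Nonempty (InnerUnitaryWitness H)) :
    InnerLinear H := by
  obtain ⟨W⟩ := hunit
  let := W.nring
  let := W.sring
  let := W.nalg
  have := W.findim
  obtain ⟨a, Φ, m, hm, ha, hS⟩ := hreg
  refine InnerLinear.of_innerFaithful (W.π.prod Φ) fun J hJ hJf => ?_
  have hπ : ∀ x ∈ J, W.π x = 0 := fun x hx => (Prod.ext_iff.mp (hJf x hx)).1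
  have hΦ : ∀ x ∈ J, Φ x = 0 := fun x hx => (Prod.ext_iff.mp (hJf x hx)).2
  have hJstar := hJ.starSubmodule hstar_comul hstar_counit (hJ.le_map_antipode hm ha hS hΦ)
  have hK : J ⊔ starSubmodule J = ⊥ := W.faithful _ (hJ.sup hJstar)
    (fun _ => star_mem_sup_starSubmodule)
    (fun _ => map_eq_zero_of_mem_sup_starSubmodule W.π W.star_map hπ)
  exact eq_bot_iff.mpr (hK ▸ le_sup_left)
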